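/- Fix α = 0, δ = 0, and real β, and suppose Alice and Bob each hold the same product-state primitive quantum reference frame with spins inclined at angle β. Then the probability that both local G-twirlings project onto the respective J=1/2 sectors is p_{2,2} = Tr[∑_{i,j∈{1,2}} (M_i ⊗ M_j)|ψ⁻⟩⟨ψ⁻|(M_i ⊗ M_j)†] = (1/18)(7 − cos β) sin²(β/2), where |ψ⁻⟩ = (|01⟩−|10⟩)/√2 and M_i acts on Alice's half while M_j acts on Bob's half of the singlet. -/
import Mathlib


open Matrix Kronecker
open scoped ComplexOrder

/-- The first Kraus operator `M₁` of the quantum operation induced by G-twirling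
with the canonical primitive reference frame `|QRF(α,β,δ)⟩`. -/
noncomputable def M1 (α β δ : ℝ) : Matrix (Fin 2) (Fin 2) ℂ :=
  !![(Real.sqrt 2 : ℂ)⁻¹ * (Complex.exp (Complex.I * δ) * Real.cos α - Real.sin α) *
        Real.sin (β / 2), 0;
     -((Real.sqrt 6 : ℂ)⁻¹ * (Complex.exp (Complex.I * δ) * Real.cos α + Real.sin α) *
        Real.sin (β / 2)),
     (Real.sqrt (2 / 3) : ℂ) * Real.cos α * Real.cos (β / 2)]

/-- The second Kraus operator `M₂`. -/
noncomputable def M2 (α β δ : ℝ) : Matrix (Fin 2) (Fin 2) ℂ :=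
  !![0, (Real.sqrt 2 : ℂ)⁻¹ * (Complex.exp (Complex.I * δ) * Real.cos α - Real.sin α) *
        Real.sin (β / 2);
     0, (Real.sqrt 6 : ℂ)⁻¹ * (Complex.exp (Complex.I * δ) * Real.cos α + Real.sin α) *
        Real.sin (β / 2)]

/-- The reference-frame-induced completely positive map
`Φ(ρ) := M₁ ρ M₁† + M₂ ρ M₂†` on single-qubit matrices. -/
noncomputable def Φmap (α β δ : ℝ) (ρ : Matrix (Fin 2) (Fin 2) ℂ) :
    Matrix (Fin 2) (Fin 2) ℂ :=
  M1 α β δ * ρ * (M1 α β δ)ᴴ + M2 α β δ * ρ * (M2 α β δ)ᴴ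

/-- The Pauli matrices `σ_x, σ_y, σ_z`. -/
def pauli : Fin 3 → Matrix (Fin 2) (Fin 2) ℂ :=
  ![!![0, 1; 1, 0], !![0, -Complex.I; Complex.I, 0], !![1, 0; 0, -1]]


/-- The singlet state `|ψ⁻⟩ = (|01⟩ − |10⟩)/√2` on two qubits. -/
noncomputable def singletVec : Fin 2 × Fin 2 → ℂ := fun x =>
  if x = (0, 1) then (Real.sqrt 2 : ℂ)⁻¹
  else if x = (1, 0) then -(Real.sqrt 2 : ℂ)⁻¹ else 0

/-- The singlet density matrix `|ψ⁻⟩⟨ψ⁻|`. -/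
noncomputable def singletMat : Matrix (Fin 2 × Fin 2) (Fin 2 × Fin 2) ℂ :=
  Matrix.vecMulVec singletVec (star singletVec)

/-- The (unnormalized) state
`ρ̃ := (M₁ ⊗ I₂)|ψ⁻⟩⟨ψ⁻|(M₁ ⊗ I₂)† + (M₂ ⊗ I₂)|ψ⁻⟩⟨ψ⁻|(M₂ ⊗ I₂)†` obtained
by G-twirling Alice's side of the singlet. -/
noncomputable def rhoTilde (α β δ : ℝ) : Matrix (Fin 2 × Fin 2) (Fin 2 × Fin 2) ℂ :=
  (M1 α β δ ⊗ₖ (1 : Matrix (Fin 2) (Fin 2) ℂ)) * singletMat *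
      (M1 α β δ ⊗ₖ (1 : Matrix (Fin 2) (Fin 2) ℂ))ᴴ +
    (M2 α β δ ⊗ₖ (1 : Matrix (Fin 2) (Fin 2) ℂ)) * singletMat *
      (M2 α β δ ⊗ₖ (1 : Matrix (Fin 2) (Fin 2) ℂ))ᴴ

/-- The two Kraus operators as a family. -/
noncomputable def krausOps (α β δ : ℝ) : Fin 2 → Matrix (Fin 2) (Fin 2) ℂ :=
  ![M1 α β δ, M2 α β δ]

/-- For `α = 0`, `δ = 0`, when Alice and Bob each hold the same product-state
primitive reference frame with spins inclined at angle `β`, the probability that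
both local G-twirlings project onto the respective `J = 1/2` sectors is
`p₂,₂ = Tr[∑_{i,j} (Mᵢ ⊗ Mⱼ)|ψ⁻⟩⟨ψ⁻|(Mᵢ ⊗ Mⱼ)†] = (1/18)(7 − cos β) sin²(β/2)`. -/
theorem both_sides_projection_probability (β : ℝ) :
    (∑ i : Fin 2, ∑ j : Fin 2,
        (krausOps 0 β 0 i ⊗ₖ krausOps 0 β 0 j) * singletMat *
          (krausOps 0 β 0 i ⊗ₖ krausOps 0 β 0 j)ᴴ).trace =
      (((1 / 18) * (7 - Real.cos β) * Real.sin (β / 2) ^ 2 : ℝ) : ℂ) := by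
  simp only [krausOps, M1, M2, singletMat, singletVec, Matrix.trace, Matrix.diag,
    Fin.sum_univ_two, Matrix.sum_apply, Matrix.add_apply, Matrix.mul_apply,
    Matrix.conjTranspose_apply, Matrix.kroneckerMap_apply, Matrix.vecMulVec_apply,
    Fintype.sum_prod_type, Matrix.cons_val', Matrix.cons_val_zero, Matrix.cons_val_one,
    Matrix.head_cons, Matrix.head_fin_const, Matrix.empty_val', Matrix.cons_val_fin_one,
    Pi.star_apply, Complex.ofReal_zero, Real.cos_zero, Real.sin_zero, Complex.ofReal_one,
    mul_zero, zero_mul, mul_one, one_mul, Complex.exp_zero, add_zero, zero_add, sub_zero]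
  norm_num [Prod.ext_iff, Matrix.cons_val_zero, Matrix.cons_val_one, Matrix.head_cons, Matrix.head_fin_const, star_mul', star_inv₀, Complex.star_def, Complex.conj_ofReal, Matrix.cons_val_fin_one, Matrix.empty_val']
  have e1 : ((β:ℂ)/2) = ((β/2:ℝ):ℂ) := by push_cast; ring
  simp only [e1, ← Complex.ofReal_sin, ← Complex.ofReal_cos, Complex.conj_ofReal]
  norm_cast
  have s2 : Real.sqrt 2 ^ 2 = 2 := Real.sq_sqrt (by norm_num)
  have s3 : Real.sqrt 3 ^ 2 = 3 := Real.sq_sqrt (by norm_num)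
  have s6 : Real.sqrt 6 = Real.sqrt 2 * Real.sqrt 3 := by
    rw [← Real.sqrt_mul (by norm_num)]; norm_num
  have h2 : Real.sqrt 2 ≠ 0 := by positivity
  have h3 : Real.sqrt 3 ≠ 0 := by positivity
  have hp : Real.sin (β/2)^2 + Real.cos (β/2)^2 = 1 := Real.sin_sq_add_cos_sq _
  have hc : Real.cos β = 1 - 2 * Real.sin (β/2)^2 := by
    have h := Real.cos_two_mul (β/2)
    rw [show 2*(β/2) = β by ring] at h
    rw [h, Real.cos_sq']; ring
  have key : (√2)⁻¹ * Real.sin (β / 2) * ((√2)⁻¹ * Real.sin (β / 2)) * ((√2)⁻¹ * (√2)⁻¹) *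
              ((√2)⁻¹ * Real.sin (β / 2) * ((√2)⁻¹ * Real.sin (β / 2))) +
            (√2)⁻¹ * Real.sin (β / 2) * ((√2)⁻¹ * Real.sin (β / 2)) * ((√2)⁻¹ * (√2)⁻¹) *
              ((√2)⁻¹ * Real.sin (β / 2) * ((√2)⁻¹ * Real.sin (β / 2))) +
          ((√2)⁻¹ * Real.sin (β / 2) * (√2 / √3 * Real.cos (β / 2)) * ((√2)⁻¹ * (√2)⁻¹) *
                ((√2)⁻¹ * Real.sin (β / 2) * (√2 / √3 * Real.cos (β / 2))) +
              (√2)⁻¹ * Real.sin (β / 2) * ((√6)⁻¹ * Real.sin (β / 2)) * ((√2)⁻¹ * (√2)⁻¹) *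
                ((√2)⁻¹ * Real.sin (β / 2) * ((√6)⁻¹ * Real.sin (β / 2))) +
            (√2)⁻¹ * Real.sin (β / 2) * ((√6)⁻¹ * Real.sin (β / 2)) * ((√2)⁻¹ * (√2)⁻¹) *
              ((√2)⁻¹ * Real.sin (β / 2) * ((√6)⁻¹ * Real.sin (β / 2)))) +
        (√2 / √3 * Real.cos (β / 2) * ((√2)⁻¹ * Real.sin (β / 2)) * ((√2)⁻¹ * (√2)⁻¹) *
                (√2 / √3 * Real.cos (β / 2) * ((√2)⁻¹ * Real.sin (β / 2))) +
              (√6)⁻¹ * Real.sin (β / 2) * ((√2)⁻¹ * Real.sin (β / 2)) * ((√2)⁻¹ * (√2)⁻¹) *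
                ((√6)⁻¹ * Real.sin (β / 2) * ((√2)⁻¹ * Real.sin (β / 2))) +
            (√6)⁻¹ * Real.sin (β / 2) * ((√2)⁻¹ * Real.sin (β / 2)) * ((√2)⁻¹ * (√2)⁻¹) *
              ((√6)⁻¹ * Real.sin (β / 2) * ((√2)⁻¹ * Real.sin (β / 2))) +
          (-((-((√6)⁻¹ * Real.sin (β / 2) * (√2 / √3 * Real.cos (β / 2)) * ((√2)⁻¹ * (√2)⁻¹)) +
                      √2 / √3 * Real.cos (β / 2) * ((√6)⁻¹ * Real.sin (β / 2)) * ((√2)⁻¹ * (√2)⁻¹)) *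
                    ((√6)⁻¹ * Real.sin (β / 2) * (√2 / √3 * Real.cos (β / 2)))) +
                -(((√6)⁻¹ * Real.sin (β / 2) * (√2 / √3 * Real.cos (β / 2)) * ((√2)⁻¹ * (√2)⁻¹) +
                      -(√2 / √3 * Real.cos (β / 2) * ((√6)⁻¹ * Real.sin (β / 2)) * ((√2)⁻¹ * (√2)⁻¹))) *
                    (√2 / √3 * Real.cos (β / 2) * ((√6)⁻¹ * Real.sin (β / 2)))) +
              (√6)⁻¹ * Real.sin (β / 2) * ((√6)⁻¹ * Real.sin (β / 2)) * ((√2)⁻¹ * (√2)⁻¹) *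
                ((√6)⁻¹ * Real.sin (β / 2) * ((√6)⁻¹ * Real.sin (β / 2))) +
            (√6)⁻¹ * Real.sin (β / 2) * ((√6)⁻¹ * Real.sin (β / 2)) * ((√2)⁻¹ * (√2)⁻¹) *
              ((√6)⁻¹ * Real.sin (β / 2) * ((√6)⁻¹ * Real.sin (β / 2))))) =
      1 / 18 * (7 - Real.cos β) * Real.sin (β / 2) ^ 2 := by
    rw [s6, hc]
    have p4 : (Real.sqrt 2)^4 = 4 := by nlinarith [s2]
    have p6 : (Real.sqrt 2)^6 = 8 := by nlinarith [s2]
    have q4 : (Real.sqrt 3)^4 = 9 := by nlinarith [s3]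
    ring_nf
    simp only [inv_pow, p4, p6, q4, s2, s3]
    norm_num
    linear_combination (Real.sin (β*(1/2))^2 / 3) * Real.sin_sq_add_cos_sq (β*(1/2))
  rw [key]
  push_cast
  ring
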